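/- arXiv:math/0508133 — 2 statements merged into one kernel-verified Lean document; each statement's English description precedes it below -/
import Mathlib

section
/- Let A be a commutative ring and Q a finitely generated A-module of length 2. Then either Q is a cyclic A-module (i.e., Q ≅ A/J for some ideal J), or Q ≅ A/m ⊕ A/m for some maximal ideal m of A. -/
/-- `Q` has length `n` as an `A`-module: there is a composition series from `⊥` to `⊤`
of length `n`. -/
def moduleLengthEq (A : Type) [CommRing A] (Q : Type) [AddCommGroup Q] [Module A Q]
    (n : ℕ) : Prop :=
  ∃ s : CompositionSeries (Submodule A Q), s.head = ⊥ ∧ s.last = ⊤ ∧ s.length = n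

/-!
The middle term `N` of a composition series is both a simple submodule and a maximal one. If `Q`
is not cyclic, then for any `q ∉ N` the proper submodule `A ∙ q` cannot contain `N`, so it is a
complement of `N` and `Q ≅ A/m₁ × A/m₂` with `m₁, m₂` maximal. When `m₁ ≠ m₂` the Chinese
remainder theorem identifies this with `A/(m₁ ⊓ m₂)`, so `Q` is cyclic after all.
-/

noncomputable def Ideal.quotientInfLinearEquivQuotientProd {R : Type*} [CommRing R]
    (I J : Ideal R) (h : IsCoprime I J) : (R ⧸ I ⊓ J) ≃ₗ[R] (R ⧸ I) × (R ⧸ J) :=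
  (AlgEquiv.ofRingEquiv (f := Ideal.quotientInfEquivQuotientProd I J h) fun _ => rfl).toLinearEquiv

section

variable {A : Type} [CommRing A] {Q : Type} [AddCommGroup Q] [Module A Q]

lemma exists_isAtom_isCoatom_of_moduleLengthEq_two (h : moduleLengthEq A Q 2) :
    ∃ N : Submodule A Q, IsAtom N ∧ IsCoatom N := by
  obtain ⟨s, hbot, htop, hlen⟩ := h
  refine ⟨s ⟨1, by omega⟩, bot_covBy_iff.mp ?_, covBy_top_iff.mp ?_⟩
  · rw [← hbot]; exact s.step ⟨0, by omega⟩
  · have hlast : (⟨1, by omega⟩ : Fin s.length).succ = Fin.last s.length :=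
      Fin.ext (by simp [hlen])
    rw [← htop, RelSeries.last, ← hlast]
    exact s.step ⟨1, by omega⟩

lemma isCompl_span_singleton_of_notMem {S : Submodule A Q}
    (hnc : ∀ x : Q, Submodule.span A {x} ≠ ⊤) (hatom : IsAtom S) (hcoatom : IsCoatom S)
    {q : Q} (hq : q ∉ S) :
    IsCompl S (Submodule.span A {q}) := by
  have hsup : S ⊔ Submodule.span A {q} = ⊤ :=
    hcoatom.2 _ (left_lt_sup.mpr (by rwa [Submodule.span_singleton_le_iff_mem]))
  refine ⟨disjoint_iff.mpr ?_, codisjoint_iff.mpr hsup⟩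
  refine (hatom.le_iff.mp inf_le_left).resolve_right fun hinf => hnc q ?_
  rwa [sup_eq_right.mpr (hinf ▸ inf_le_right)] at hsup

lemma exists_prod_quotient_equiv_of_isCompl {N P : Submodule A Q} (hN : IsSimpleModule A N)
    (hP : IsSimpleModule A P) (h : IsCompl N P) :
    ∃ m₁ m₂ : Ideal A, m₁.IsMaximal ∧ m₂.IsMaximal ∧ Nonempty (((A ⧸ m₁) × (A ⧸ m₂)) ≃ₗ[A] Q) := by
  obtain ⟨m₁, hm₁, ⟨e₁⟩⟩ := isSimpleModule_iff_quot_maximal.mp hN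
  obtain ⟨m₂, hm₂, ⟨e₂⟩⟩ := isSimpleModule_iff_quot_maximal.mp hP
  exact ⟨m₁, m₂, hm₁, hm₂,
    ⟨(e₁.symm.prodCongr e₂.symm).trans (Submodule.prodEquivOfIsCompl N P h)⟩⟩

lemma exists_prod_quotient_equiv_of_not_cyclic (hlen : moduleLengthEq A Q 2)
    (hnc : ∀ x : Q, Submodule.span A {x} ≠ ⊤) :
    ∃ m₁ m₂ : Ideal A, m₁.IsMaximal ∧ m₂.IsMaximal ∧ Nonempty (((A ⧸ m₁) × (A ⧸ m₂)) ≃ₗ[A] Q) := by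
  obtain ⟨N, hatom, hcoatom⟩ := exists_isAtom_isCoatom_of_moduleLengthEq_two hlen
  obtain ⟨q, -, hq⟩ := SetLike.exists_of_lt hcoatom.lt_top
  have hcompl := isCompl_span_singleton_of_notMem hnc hatom hcoatom hq
  have hP : IsSimpleModule A (Submodule.span A {q}) :=
    (isSimpleModule_iff_isCoatom.mpr hcoatom).congr
      (Submodule.quotientEquivOfIsCompl _ _ hcompl).symm
  exact exists_prod_quotient_equiv_of_isCompl (isSimpleModule_iff_isAtom.mpr hatom) hP hcompl

lemma exists_quotient_equiv_of_span_singleton_eq_top {x : Q} (hx : Submodule.span A {x} = ⊤) :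
    ∃ J : Ideal A, Nonempty ((A ⧸ J) ≃ₗ[A] Q) := by
  have hsurj : Function.Surjective (LinearMap.toSpanSingleton A Q x) := by
    rw [← LinearMap.range_eq_top, ← LinearMap.span_singleton_eq_range, hx]
  exact ⟨_, ⟨LinearMap.quotKerEquivOfSurjective _ hsurj⟩⟩

end

theorem cyclic_or_square_of_length_two_general (A : Type) [CommRing A]
    (Q : Type) [AddCommGroup Q] [Module A Q]
    (hlen : moduleLengthEq A Q 2) :
    (∃ J : Ideal A, Nonempty ((A ⧸ J) ≃ₗ[A] Q)) ∨
    (∃ m : Ideal A, m.IsMaximal ∧ Nonempty (((A ⧸ m) × (A ⧸ m)) ≃ₗ[A] Q)) := by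
  by_cases hcyc : ∃ x : Q, Submodule.span A {x} = ⊤
  · obtain ⟨x, hx⟩ := hcyc
    exact Or.inl (exists_quotient_equiv_of_span_singleton_eq_top hx)
  push Not at hcyc
  obtain ⟨m₁, m₂, hm₁, hm₂, ⟨e⟩⟩ := exists_prod_quotient_equiv_of_not_cyclic hlen hcyc
  by_cases hm : m₁ = m₂
  · subst hm
    exact Or.inr ⟨m₁, hm₁, ⟨e⟩⟩
  · exact Or.inl ⟨m₁ ⊓ m₂,
      ⟨(Ideal.quotientInfLinearEquivQuotientProd m₁ m₂ (Ideal.isCoprime_of_isMaximal hm)).trans e⟩⟩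

/-- A finitely generated module of length `2` over a commutative ring is either cyclic
(isomorphic to `A ⧸ J` for some ideal `J`), or isomorphic to `A ⧸ m ⊕ A ⧸ m` for some
maximal ideal `m`. -/
theorem cyclic_or_square_of_length_two (A : Type) [CommRing A]
    (Q : Type) [AddCommGroup Q] [Module A Q] [Module.Finite A Q]
    (hlen : moduleLengthEq A Q 2) :
    (∃ J : Ideal A, Nonempty ((A ⧸ J) ≃ₗ[A] Q)) ∨
    (∃ m : Ideal A, m.IsMaximal ∧ Nonempty (((A ⧸ m) × (A ⧸ m)) ≃ₗ[A] Q)) :=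
  cyclic_or_square_of_length_two_general A Q hlen
end

section
/- Let R be a commutative ring and I an ideal generated by a regular sequence x, y of length 2. Then for every n ≥ 1, the natural surjection Sym^n(I) → I^n is an isomorphism of R-modules. -/
open PiTensorProduct TensorProduct Pointwise

noncomputable section

/-- The submodule of the `n`-th tensor power of `M` generated by differences of pure
tensors that differ by a permutation of the factors. -/
def symRel (R M : Type) [CommRing R] [AddCommGroup M] [Module R M] (n : ℕ) :
    Submodule R (⨂[R] _ : Fin n, M) :=
  Submodule.span R
    {x | ∃ (v : Fin n → M) (σ : Equiv.Perm (Fin n)), x = tprod R v - tprod R (v ∘ σ)}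

/-- The `n`-th symmetric power of the `R`-module `M`. -/
def SymPow (R M : Type) [CommRing R] [AddCommGroup M] [Module R M] (n : ℕ) : Type :=
  (⨂[R] _ : Fin n, M) ⧸ symRel R M n

instance (R M : Type) [CommRing R] [AddCommGroup M] [Module R M] (n : ℕ) :
    AddCommGroup (SymPow R M n) :=
  inferInstanceAs (AddCommGroup ((⨂[R] _ : Fin n, M) ⧸ symRel R M n))

instance (R M : Type) [CommRing R] [AddCommGroup M] [Module R M] (n : ℕ) :
    Module R (SymPow R M n) :=
  inferInstanceAs (Module R ((⨂[R] _ : Fin n, M) ⧸ symRel R M n))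

/-- The multiplication map `Sym^n(I) → R` induced by `(x₁, …, xₙ) ↦ x₁ ⋯ xₙ` for an
ideal `I` of `R`; its image is `I ^ n`. -/
def symPowMul (R : Type) [CommRing R] (I : Ideal R) (n : ℕ) :
    SymPow R ↥I n →ₗ[R] R :=
  Submodule.liftQ _
    (PiTensorProduct.lift
      ((MultilinearMap.mkPiAlgebra R (Fin n) R).compLinearMap fun _ => I.subtype))
    (by
      rw [symRel, Submodule.span_le]
      rintro _ ⟨v, σ, rfl⟩
      simp only [SetLike.mem_coe, LinearMap.mem_ker, map_sub, PiTensorProduct.lift.tprod,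
        MultilinearMap.compLinearMap_apply, MultilinearMap.mkPiAlgebra_apply,
        Function.comp_apply, Submodule.coe_subtype, sub_eq_zero]
      exact (Equiv.prod_comp σ fun i => ((v i : R))).symm)

/-! `Sym^n(I)` is spanned by the monomials `e k = xᵏ yⁿ⁻ᵏ`, which satisfy the Koszul relations
`x • e k = y • e (k + 1)`. For a regular sequence `x, y`, every relation `∑ aₖ xᵏ yⁿ⁻ᵏ = 0` in `R`
is a consequence of the Koszul relations, so `∑ aₖ • e k = 0` already holds in `Sym^n(I)`.
Surjectivity onto `Iⁿ` holds for any ideal, since `Iⁿ` is spanned by products of `n` elements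
of `I`. -/

namespace SymPow

variable (R : Type) {M : Type} [CommRing R] [AddCommGroup M] [Module R M] {n : ℕ}

def mk : MultilinearMap R (fun _ : Fin n => M) (SymPow R M n) :=
  (symRel R M n).mkQ.compMultilinearMap (tprod R)

/-- The class of `X ^ k * Y ^ (n - k)`. -/
def monomial (X Y : M) (k : ℕ) : SymPow R M n :=
  mk R fun j : Fin n => if (j : ℕ) < k then X else Y

variable {R}

theorem mk_comp_perm (v : Fin n → M) (σ : Equiv.Perm (Fin n)) : mk R (v ∘ σ) = mk R v :=
  ((Submodule.Quotient.eq (symRel R M n)).2 (Submodule.subset_span ⟨v, σ, rfl⟩)).symm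

theorem span_range_mk : Submodule.span R (Set.range (mk R (M := M) (n := n))) = ⊤ := by
  have h := congrArg (Submodule.map (symRel R M n).mkQ)
    (PiTensorProduct.span_tprod_eq_top (R := R) (s := fun _ : Fin n => M))
  rwa [Submodule.map_span, Submodule.map_top, Submodule.range_mkQ, ← Set.range_comp] at h

theorem mk_ite_mem_eq_monomial (X Y : M) (s : Finset (Fin n)) :
    mk R (fun j => if j ∈ s then X else Y) = monomial R X Y s.card := by
  set t : Finset (Fin n) := Finset.univ.filter fun j => (j : ℕ) < s.card
  have hcard : Fintype.card t = Fintype.card s := by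
    rw [Fintype.card_coe, Fintype.card_coe, Fin.card_filter_val_lt]
    exact min_eq_right (by simpa using s.card_le_univ)
  set σ : Equiv.Perm (Fin n) := (Fintype.equivOfCardEq hcard).extendSubtype
  rw [monomial, ← mk_comp_perm _ σ]
  congr 1
  funext j
  have hσ : σ j ∈ s ↔ j ∈ t :=
    ⟨fun h => by_contra fun hj => Equiv.extendSubtype_not_mem _ j hj h,
      Equiv.extendSubtype_mem _ j⟩
  simp only [Function.comp_apply, hσ, t, Finset.mem_filter, Finset.mem_univ, true_and]

theorem span_monomial_eq_top {X Y : M} (hXY : Submodule.span R {X, Y} = ⊤) :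
    Submodule.span R (monomial (n := n) R X Y '' (Finset.range (n + 1) : Set ℕ)) = ⊤ := by
  rw [eq_top_iff, ← span_range_mk, Submodule.span_le]
  rintro _ ⟨v, rfl⟩
  choose a b hab using fun j => Submodule.mem_span_pair.1 (hXY ▸ Submodule.mem_top (x := v j))
  have hv : v = (fun j => a j • X) + (fun j => b j • Y) := funext fun j => (hab j).symm
  rw [hv, MultilinearMap.map_add_univ]
  refine Submodule.sum_mem _ fun s _ => ?_
  have hpiecewise : s.piecewise (fun j => a j • X) (fun j => b j • Y) =
      fun j => (if j ∈ s then a j else b j) • (if j ∈ s then X else Y) := by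
    funext j
    by_cases h : j ∈ s <;> simp [h]
  rw [hpiecewise, MultilinearMap.map_smul_univ, mk_ite_mem_eq_monomial]
  refine Submodule.smul_mem _ _ (Submodule.subset_span ⟨s.card, ?_, rfl⟩)
  simpa [Nat.lt_succ_iff] using s.card_le_univ

theorem smul_monomial {X Y : M} {x y : R} (hXY : x • Y = y • X) {k : ℕ} (hk : k < n) :
    x • monomial R X Y k = y • monomial (n := n) R X Y (k + 1) := by
  set i : Fin n := ⟨k, hk⟩
  set v : Fin n → M := fun j => if (j : ℕ) < k then X else Y
  have hY : Function.update v i Y = v := by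
    funext j
    by_cases h : j = i <;> simp [Function.update, h, v, i]
  have hX : Function.update v i X = fun j : Fin n => if (j : ℕ) < k + 1 then X else Y := by
    funext j
    by_cases h : j = i
    · simp [h, v, i]
    · have : (j : ℕ) ≠ k := fun h' => h (Fin.ext h')
      simp only [Function.update_of_ne h, v]
      exact if_congr (by omega) rfl rfl
  calc x • mk R v = x • mk R (Function.update v i Y) := by rw [hY]
    _ = y • mk R (Function.update v i X) := by
      rw [← MultilinearMap.map_update_smul, hXY, MultilinearMap.map_update_smul]
    _ = y • monomial R X Y (k + 1) := by rw [hX, monomial]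

end SymPow

section RegularPair

variable {R : Type} [CommRing R] {x y : R}

theorem dvd_of_dvd_mul_pow_of_mk_mem_nonZeroDivisors
    (hy : Ideal.Quotient.mk (Ideal.span {x}) y ∈ nonZeroDivisors (R ⧸ Ideal.span {x}))
    {a : R} (m : ℕ) (h : x ∣ a * y ^ m) : x ∣ a := by
  rw [← Ideal.mem_span_singleton, ← Ideal.Quotient.eq_zero_iff_mem] at h ⊢
  rw [map_mul, map_pow] at h
  exact (pow_mem hy m).2 _ h

theorem sum_mul_pow_mul_pow_succ_eq (a : ℕ → R) (n : ℕ) :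
    ∑ i ∈ Finset.range (n + 2), a i * x ^ i * y ^ (n + 1 - i) =
      a 0 * y ^ (n + 1) + x * ∑ i ∈ Finset.range (n + 1), a (i + 1) * x ^ i * y ^ (n - i) := by
  rw [Finset.sum_range_succ', Finset.mul_sum, add_comm]
  congr 1
  · simp
  · refine Finset.sum_congr rfl fun i _ => ?_
    rw [Nat.add_sub_add_right, pow_succ]
    ring

/- Induction on `n`: `x ∣ a 0` since `y` is regular modulo `x`; cancelling `x` leaves a relation
of degree `n - 1`, applied to the shifted family `e ∘ succ`. -/
theorem sum_smul_eq_zero_of_sum_mul_pow_eq_zero (hx : x ∈ nonZeroDivisors R)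
    (hy : Ideal.Quotient.mk (Ideal.span {x}) y ∈ nonZeroDivisors (R ⧸ Ideal.span {x}))
    {N : Type} [AddCommGroup N] [Module R N] :
    ∀ {n : ℕ} {e : ℕ → N}, (∀ k < n, x • e k = y • e (k + 1)) → ∀ {a : ℕ → R},
      ∑ i ∈ Finset.range (n + 1), a i * x ^ i * y ^ (n - i) = 0 →
      ∑ i ∈ Finset.range (n + 1), a i • e i = 0
  | 0, e, _, a, h => by simp_all
  | n + 1, e, he, a, h => by
    rw [sum_mul_pow_mul_pow_succ_eq] at h
    obtain ⟨b, hb⟩ : x ∣ a 0 := dvd_of_dvd_mul_pow_of_mk_mem_nonZeroDivisors hy (n + 1)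
      ⟨-∑ i ∈ Finset.range (n + 1), a (i + 1) * x ^ i * y ^ (n - i), by linear_combination h⟩
    set a' : ℕ → R := fun i => a (i + 1) + if i = 0 then b * y else 0
    have ha' : ∑ i ∈ Finset.range (n + 1), a' i * x ^ i * y ^ (n - i) = 0 := by
      refine (mul_right_mem_nonZeroDivisors_eq_zero_iff hx).1 ?_
      simp only [a', add_mul, ite_mul, zero_mul, Finset.sum_add_distrib, Finset.sum_ite_eq',
        Finset.mem_range, Nat.succ_pos, if_true]
      linear_combination h - hb * y ^ (n + 1)
    calc ∑ i ∈ Finset.range (n + 2), a i • e i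
        = ∑ i ∈ Finset.range (n + 1), a (i + 1) • e (i + 1) + (b * y) • e 1 := by
          rw [Finset.sum_range_succ', hb, mul_comm x, mul_smul, he 0 (by omega), mul_smul]
      _ = ∑ i ∈ Finset.range (n + 1), a' i • e (i + 1) := by
          simp [a', add_smul, ite_smul, Finset.sum_add_distrib]
      _ = 0 := sum_smul_eq_zero_of_sum_mul_pow_eq_zero hx hy
          (fun k hk => he (k + 1) (by omega)) ha'

end RegularPair

section SymPowMul

variable {R : Type} [CommRing R] (I : Ideal R) {n : ℕ}

theorem symPowMul_mk (v : Fin n → I) : symPowMul R I n (SymPow.mk R v) = ∏ j, (v j : R) := by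
  change PiTensorProduct.lift _ (tprod R v) = _
  simp

theorem symPowMul_monomial (X Y : I) {k : ℕ} (hk : k ≤ n) :
    symPowMul R I n (SymPow.monomial R X Y k) = (X : R) ^ k * (Y : R) ^ (n - k) := by
  rw [SymPow.monomial, symPowMul_mk, Finset.prod_apply_ite, Finset.prod_const, Finset.prod_const,
    Fin.card_filter_val_lt, Finset.filter_not, Finset.card_sdiff, Finset.inter_univ,
    Fin.card_filter_val_lt, Finset.card_univ, Fintype.card_fin, min_eq_right hk]

theorem range_symPowMul (n : ℕ) :
    LinearMap.range (symPowMul R I n) = Submodule.restrictScalars R (I ^ n) := by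
  apply le_antisymm
  · rw [LinearMap.range_eq_map, ← SymPow.span_range_mk, Submodule.map_span_le]
    rintro _ ⟨v, rfl⟩
    rw [symPowMul_mk]
    simpa using Ideal.prod_mem_prod (s := Finset.univ) (I := fun _ => I) fun j _ => (v j).2
  · intro z hz
    rw [Submodule.restrictScalars_mem, Submodule.pow_eq_span_pow_set] at hz
    refine Submodule.span_le.2 ?_ hz
    intro _ hw
    obtain ⟨f, rfl⟩ := Set.mem_pow.1 hw
    exact ⟨SymPow.mk R f, by rw [symPowMul_mk, List.prod_ofFn]⟩

end SymPowMul

theorem symPowMul_injective_of_regular {R : Type} [CommRing R] {x y : R}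
    (hx : x ∈ nonZeroDivisors R)
    (hy : Ideal.Quotient.mk (Ideal.span {x}) y ∈ nonZeroDivisors (R ⧸ Ideal.span {x})) (n : ℕ) :
    Function.Injective (symPowMul R (Ideal.span {x, y}) n) := by
  let X : Ideal.span {x, y} := ⟨x, Ideal.subset_span (by simp)⟩
  let Y : Ideal.span {x, y} := ⟨y, Ideal.subset_span (by simp)⟩
  have hXY : Submodule.span R {X, Y} = ⊤ := by
    refine Submodule.eq_top_iff'.2 fun m => Submodule.mem_span_pair.2 ?_
    obtain ⟨a, b, hab⟩ := Ideal.mem_span_pair.1 m.2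
    exact ⟨a, b, Subtype.ext (by simpa [X, Y] using hab)⟩
  rw [← LinearMap.ker_eq_bot, Submodule.eq_bot_iff]
  intro z hz
  obtain ⟨c, rfl⟩ := (Submodule.mem_span_image_finset_iff_exists_fun' R).1
    ((SymPow.span_monomial_eq_top hXY).ge (Submodule.mem_top (x := z)))
  refine sum_smul_eq_zero_of_sum_mul_pow_eq_zero hx hy (e := SymPow.monomial R X Y) (a := c)
    (fun k hk => SymPow.smul_monomial (by ext; simp [X, Y, mul_comm]) hk) ?_
  rw [LinearMap.mem_ker, map_sum] at hz
  rw [← hz]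
  refine Finset.sum_congr rfl fun i hi => ?_
  rw [map_smul, symPowMul_monomial _ _ _ (by simpa [Nat.lt_succ_iff] using hi), smul_eq_mul,
    mul_assoc]

theorem symPow_mul_bijective_onto_pow_general (R : Type) [CommRing R] (x y : R)
    (hx : x ∈ nonZeroDivisors R)
    (hy : Ideal.Quotient.mk (Ideal.span {x}) y ∈ nonZeroDivisors (R ⧸ Ideal.span {x}))
    (n : ℕ) :
    Function.Injective (symPowMul R (Ideal.span {x, y}) n) ∧
    LinearMap.range (symPowMul R (Ideal.span {x, y}) n) =
      Submodule.restrictScalars R ((Ideal.span {x, y} : Ideal R) ^ n) :=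
  ⟨symPowMul_injective_of_regular hx hy n, range_symPowMul _ n⟩

/-- If `I = (x, y)` for a regular sequence `x, y` in a commutative ring `R` (that is,
`x` is a nonzerodivisor and `y` is a nonzerodivisor on `R/(x)`), then for every `n ≥ 1`
the natural surjection `Sym^n(I) → Iⁿ` is an isomorphism: the multiplication map
`Sym^n(I) → R` is injective with image `Iⁿ`. -/
theorem symPow_mul_bijective_onto_pow (R : Type) [CommRing R] (x y : R)
    (hx : x ∈ nonZeroDivisors R)
    (hy : Ideal.Quotient.mk (Ideal.span {x}) y ∈ nonZeroDivisors (R ⧸ Ideal.span {x}))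
    (n : ℕ) (hn : 1 ≤ n) :
    Function.Injective (symPowMul R (Ideal.span {x, y}) n) ∧
    LinearMap.range (symPowMul R (Ideal.span {x, y}) n) =
      Submodule.restrictScalars R ((Ideal.span {x, y} : Ideal R) ^ n) :=
  symPow_mul_bijective_onto_pow_general R x y hx hy n

end
end
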